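/- arXiv:2010.08956 — 2 statements merged into one kernel-verified Lean document; each statement's English description precedes it below -/
import Mathlib

section
/- Let c₀ > 0 and let α: [0, T] → [0, ∞) be absolutely continuous with (1/2)(d/dt)α² + c₀ α² ≤ F(t)·α for a.e. t, where F ≥ 0 is integrable. Then for all t ∈ [0, T], α(t) + c₀ ∫₀ᵗ α(τ) dτ ≤ α(0) + ∫₀ᵗ F(τ) dτ. -/
/-!
Wherever `α > 0`, dividing the hypothesis by `α` gives `α' + c₀ α ≤ F`; wherever `α = 0`, the
point is a minimum of the nonnegative function `α`, so `α' = 0` and the same bound reads `0 ≤ F`.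
Hence `α + c₀ ∫₀ˢ α` has derivative at most `F` almost everywhere, and integrating this
differential inequality gives the claim.
-/

open MeasureTheory Set Filter Topology

theorem deriv_add_mul_le_of_half_deriv_sq_add_mul_sq_le {f : ℝ → ℝ} {x c F : ℝ}
    (hf : DifferentiableAt ℝ f x) (hf_nonneg : ∀ᶠ y in 𝓝 x, 0 ≤ f y) (hF : 0 ≤ F)
    (h : (1 / 2) * deriv (fun s => f s ^ 2) x + c * f x ^ 2 ≤ F * f x) :
    deriv f x + c * f x ≤ F := by
  rcases hf_nonneg.self_of_nhds.eq_or_lt with hzero | hpos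
  · have hmin : IsLocalMin f x := hf_nonneg.mono fun y hy => hzero ▸ hy
    rw [hmin.deriv_eq_zero, ← hzero]
    simpa using hF
  · have hsq : deriv (fun s => f s ^ 2) x = 2 * f x * deriv f x := by
      simpa using (hf.hasDerivAt.fun_pow 2).deriv
    rw [hsq] at h
    nlinarith

theorem sub_le_integral_of_hasDerivAt_of_ae_le {g g' G : ℝ → ℝ} {a b : ℝ} (hab : a ≤ b)
    (hcont : ContinuousOn g (Icc a b)) (hderiv : ∀ x ∈ Ioo a b, HasDerivAt g (g' x) x)
    (hG : IntegrableOn G (Icc a b)) (hle : ∀ᵐ x, x ∈ Ioo a b → g' x ≤ G x) :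
    g b - g a ≤ ∫ x in a..b, G x := by
  -- `max G g'` dominates `g'` everywhere and agrees with `G` almost everywhere.
  have hmax : ∀ᵐ x, x ∈ Ioo a b → max (G x) (g' x) = G x := by
    filter_upwards [hle] with x hx hmem using max_eq_left (hx hmem)
  have hmax_int : IntegrableOn (fun x => max (G x) (g' x)) (Icc a b) := by
    refine hG.congr_fun_ae ?_
    rw [EventuallyEq, ← Measure.restrict_congr_set Ioo_ae_eq_Icc, ae_restrict_iff' measurableSet_Ioo]
    filter_upwards [hmax] with x hx hmem using (hx hmem).symm
  calc g b - g a ≤ ∫ x in a..b, max (G x) (g' x) :=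
        intervalIntegral.sub_le_integral_of_hasDeriv_right_of_le hab hcont
          (fun x hx => (hderiv x hx).hasDerivWithinAt) hmax_int (fun x _ => le_max_right _ _)
    _ = ∫ x in a..b, G x := by
        simp only [intervalIntegral.integral_of_le hab, integral_Ioc_eq_integral_Ioo]
        exact setIntegral_congr_ae measurableSet_Ioo hmax

theorem continuousOn_primitive_of_continuousOn_Icc {f : ℝ → ℝ} {a b : ℝ} (hab : a ≤ b)
    (hf : ContinuousOn f (Icc a b)) : ContinuousOn (fun s => ∫ τ in a..s, f τ) (Icc a b) := by
  have hprim := intervalIntegral.continuousOn_primitive_interval'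
    (hf.intervalIntegrable_of_Icc (μ := volume) hab) left_mem_uIcc
  rwa [uIcc_of_le hab] at hprim

theorem hasDerivAt_primitive_of_continuousOn_Icc {f : ℝ → ℝ} {a b x : ℝ}
    (hf : ContinuousOn f (Icc a b)) (hx : x ∈ Ioo a b) :
    HasDerivAt (fun s => ∫ τ in a..s, f τ) (f x) x :=
  intervalIntegral.integral_hasDerivAt_right
    ((hf.mono (Icc_subset_Icc_right hx.2.le)).intervalIntegrable_of_Icc hx.1.le)
    ((hf.mono Ioo_subset_Icc_self).stronglyMeasurableAtFilter isOpen_Ioo x hx)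
    (hf.continuousAt (Icc_mem_nhds hx.1 hx.2))

theorem stmt7_general (c₀ T : ℝ) (α F : ℝ → ℝ)
    (hα_nonneg : ∀ t : ℝ, 0 ≤ α t) (hF_nonneg : ∀ t : ℝ, 0 ≤ F t)
    (hF_int : IntegrableOn F (Set.Icc 0 T))
    (hα_cont : ContinuousOn α (Set.Icc 0 T))
    (hα_diff : DifferentiableOn ℝ α (Set.Icc 0 T))
    (hineq : ∀ᵐ t ∂(volume.restrict (Set.Icc 0 T)),
      (1 / 2) * deriv (fun s => (α s) ^ 2) t + c₀ * (α t) ^ 2 ≤ F t * α t) :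
    ∀ t ∈ Set.Icc (0:ℝ) T,
      α t + c₀ * ∫ τ in (0:ℝ)..t, α τ ≤ α 0 + ∫ τ in (0:ℝ)..t, F τ := by
  rintro t ⟨ht0, htT⟩
  have hsub : Icc 0 t ⊆ Icc 0 T := Icc_subset_Icc_right htT
  have hα_cont' := hα_cont.mono hsub
  have hα_diffAt : ∀ x ∈ Ioo 0 t, DifferentiableAt ℝ α x := fun x hx =>
    (hα_diff.mono hsub).differentiableAt (Icc_mem_nhds hx.1 hx.2)
  have hcont : ContinuousOn (fun s => α s + c₀ * ∫ τ in (0:ℝ)..s, α τ) (Icc 0 t) :=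
    hα_cont'.add ((continuousOn_primitive_of_continuousOn_Icc ht0 hα_cont').const_smul c₀)
  have hderiv : ∀ x ∈ Ioo 0 t,
      HasDerivAt (fun s => α s + c₀ * ∫ τ in (0:ℝ)..s, α τ) (deriv α x + c₀ * α x) x :=
    fun x hx => (hα_diffAt x hx).hasDerivAt.add
      ((hasDerivAt_primitive_of_continuousOn_Icc hα_cont' hx).const_mul c₀)
  have hle : ∀ᵐ x, x ∈ Ioo 0 t → deriv α x + c₀ * α x ≤ F x := by
    filter_upwards [(ae_restrict_iff' measurableSet_Icc).1 hineq] with x hx hmem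
    exact deriv_add_mul_le_of_half_deriv_sq_add_mul_sq_le (hα_diffAt x hmem)
      (Eventually.of_forall hα_nonneg) (hF_nonneg x) (hx (hsub (Ioo_subset_Icc_self hmem)))
  have hmain := sub_le_integral_of_hasDerivAt_of_ae_le ht0 hcont hderiv (hF_int.mono_set hsub) hle
  simp only [intervalIntegral.integral_same, mul_zero, add_zero] at hmain
  linarith

/-- Integrated energy inequality: if `α ≥ 0` is (absolutely) continuous and differentiable on
`[0,T]` with `(1/2)(d/dt)α² + c₀ α² ≤ F·α` a.e., `F ≥ 0` integrable, then for all `t ∈ [0,T]`,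
`α(t) + c₀ ∫₀ᵗ α ≤ α(0) + ∫₀ᵗ F`. -/
theorem stmt7 (c₀ T : ℝ) (hc₀ : 0 < c₀) (hT : 0 ≤ T) (α F : ℝ → ℝ)
    (hα_nonneg : ∀ t : ℝ, 0 ≤ α t) (hF_nonneg : ∀ t : ℝ, 0 ≤ F t)
    (hF_int : IntegrableOn F (Set.Icc 0 T))
    (hα_cont : ContinuousOn α (Set.Icc 0 T))
    (hα_diff : DifferentiableOn ℝ α (Set.Icc 0 T))
    (hineq : ∀ᵐ t ∂(volume.restrict (Set.Icc 0 T)),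
      (1 / 2) * deriv (fun s => (α s) ^ 2) t + c₀ * (α t) ^ 2 ≤ F t * α t) :
    ∀ t ∈ Set.Icc (0:ℝ) T,
      α t + c₀ * ∫ τ in (0:ℝ)..t, α τ ≤ α 0 + ∫ τ in (0:ℝ)..t, F τ :=
  stmt7_general c₀ T α F hα_nonneg hF_nonneg hF_int hα_cont hα_diff hineq
end

section
/- Let c₀ > 0, α ≥ 1, and g: [0, ∞) → [0, ∞) measurable with sup_{τ ≥ 1} τ^α g(τ) < ∞. Then sup_{t ≥ 2} t^α ∫₁ᵗ e^{c₀(τ − t)} g(τ) dτ ≤ C(c₀, α) sup_{τ ≥ 1} τ^α g(τ). -/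
/-!
For `1 ≤ τ ≤ t` one has `t / τ ≤ 1 + (t - τ)`, and `(1 + (t - τ))^α` is dominated by
`C e^{c₀ (t - τ) / 2}`. Hence `t^α e^{c₀(τ - t)} g(τ) ≤ K (t/τ)^α e^{c₀(τ - t)} ≤ C K e^{c₀(τ - t)/2}`,
whose integral over `[1, t]` is at most `2 C K / c₀`, uniformly in `t`.
-/

open Real MeasureTheory Set

lemma one_add_rpow_le_mul_exp {α k s : ℝ} (hα : 0 < α) (hk : 0 < k) (hs : 0 ≤ s) :
    (1 + s) ^ α ≤ max 1 (α / k) ^ α * exp (k * s) := by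
  set M := max 1 (α / k)
  have hM : 1 ≤ M := le_max_left _ _
  have hlin : 1 + s ≤ M * (1 + k / α * s) := by
    have : α / k * (k / α * s) = s := by field_simp
    nlinarith [le_max_right 1 (α / k), mul_nonneg (div_pos hk hα).le hs]
  have hexp : 1 + s ≤ M * exp (k / α * s) :=
    hlin.trans (mul_le_mul_of_nonneg_left (by linarith [add_one_le_exp (k / α * s)])
      (by linarith))
  calc (1 + s) ^ α ≤ (M * exp (k / α * s)) ^ α := by gcongr
    _ = M ^ α * exp (k * s) := by
      rw [mul_rpow (by linarith) (exp_pos _).le, ← exp_mul]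
      field_simp

lemma div_le_one_add_sub {τ t : ℝ} (hτ : 1 ≤ τ) (hτt : τ ≤ t) : t / τ ≤ 1 + (t - τ) := by
  rw [div_le_iff₀ (by linarith)]
  nlinarith

lemma div_rpow_le_mul_exp {α k τ t : ℝ} (hα : 0 < α) (hk : 0 < k) (hτ : 1 ≤ τ) (hτt : τ ≤ t) :
    (t / τ) ^ α ≤ max 1 (α / k) ^ α * exp (k * (t - τ)) :=
  calc (t / τ) ^ α ≤ (1 + (t - τ)) ^ α := by
        gcongr
        · exact div_nonneg (by linarith) (by linarith)
        · exact div_le_one_add_sub hτ hτt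
    _ ≤ max 1 (α / k) ^ α * exp (k * (t - τ)) := one_add_rpow_le_mul_exp hα hk (by linarith)

lemma integral_exp_mul_sub_le {k a t : ℝ} (hk : 0 < k) :
    ∫ τ in a..t, exp (k * (τ - t)) ≤ k⁻¹ := by
  simp_rw [mul_sub]
  rw [intervalIntegral.integral_comp_mul_sub exp hk.ne', integral_exp, sub_self, exp_zero,
    smul_eq_mul]
  exact mul_le_of_le_one_right (inv_pos.2 hk).le (by linarith [exp_pos (k * a - k * t)])

/-- No integrability of `f` is needed: if `f` is not integrable, its integral is `0`. -/
lemma intervalIntegral_mono_of_nonneg {f g : ℝ → ℝ} {a b : ℝ} (hab : a ≤ b)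
    (hf : ∀ x ∈ Icc a b, 0 ≤ f x) (h : ∀ x ∈ Icc a b, f x ≤ g x)
    (hg : IntervalIntegrable g volume a b) :
    ∫ x in a..b, f x ≤ ∫ x in a..b, g x := by
  simp only [intervalIntegral.integral_of_le hab]
  exact setIntegral_mono_of_nonneg (fun x hx ↦ hf x (Ioc_subset_Icc_self hx))
    (fun x hx ↦ h x (Ioc_subset_Icc_self hx)) hg.1

lemma rpow_mul_exp_mul_le {c₀ α K τ t y : ℝ} (hc₀ : 0 < c₀) (hα : 0 < α) (hK : 0 ≤ K)
    (hτ : 1 ≤ τ) (hτt : τ ≤ t) (hy : τ ^ α * y ≤ K) :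
    t ^ α * (exp (c₀ * (τ - t)) * y) ≤
      K * max 1 (α / (c₀ / 2)) ^ α * exp (c₀ / 2 * (τ - t)) := by
  have hτα : 0 < τ ^ α := rpow_pos_of_pos (by linarith) α
  have hy' : y ≤ K / τ ^ α := by rw [le_div_iff₀ hτα]; linarith
  have htα : 0 ≤ t ^ α := rpow_nonneg (by linarith) α
  calc t ^ α * (exp (c₀ * (τ - t)) * y)
      ≤ t ^ α * (exp (c₀ * (τ - t)) * (K / τ ^ α)) := by gcongr
    _ = K * (t / τ) ^ α * exp (c₀ * (τ - t)) := by
      rw [div_rpow (by linarith) (by linarith)]; ring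
    _ ≤ K * (max 1 (α / (c₀ / 2)) ^ α * exp (c₀ / 2 * (t - τ))) * exp (c₀ * (τ - t)) := by
      gcongr; exact div_rpow_le_mul_exp hα (by linarith) hτ hτt
    _ = K * max 1 (α / (c₀ / 2)) ^ α * exp (c₀ / 2 * (τ - t)) := by
      rw [mul_assoc, mul_assoc, ← exp_add, ← mul_assoc]; ring_nf

/-- Weighted exponential-convolution bound: if `c₀ > 0`, `α ≥ 1` and `g ≥ 0` is measurable
with `sup_{τ ≥ 1} τ^α g(τ) < ∞`, then
`sup_{t ≥ 2} t^α ∫₁ᵗ e^{c₀(τ−t)} g(τ) dτ ≤ C(c₀, α) sup_{τ ≥ 1} τ^α g(τ)`. -/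
theorem stmt19 (c₀ α : ℝ) (hc₀ : 0 < c₀) (hα : 1 ≤ α) :
    ∃ C : ℝ, 0 < C ∧ ∀ (g : ℝ → ℝ) (K : ℝ),
      Measurable g → (∀ τ : ℝ, 0 ≤ g τ) →
      (∀ τ : ℝ, 1 ≤ τ → τ ^ α * g τ ≤ K) →
      ∀ t : ℝ, 2 ≤ t →
        t ^ α * ∫ τ in (1:ℝ)..t, Real.exp (c₀ * (τ - t)) * g τ ≤ C * K := by
  set M := max 1 (α / (c₀ / 2))
  have hM : 0 < M := lt_max_of_lt_left one_pos
  refine ⟨M ^ α * (c₀ / 2)⁻¹, by positivity, fun g K _ hg hK t ht ↦ ?_⟩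
  have hK0 : 0 ≤ K := (hg 1).trans (by simpa using hK 1 le_rfl)
  calc t ^ α * ∫ τ in (1:ℝ)..t, exp (c₀ * (τ - t)) * g τ
      = ∫ τ in (1:ℝ)..t, t ^ α * (exp (c₀ * (τ - t)) * g τ) :=
        (intervalIntegral.integral_const_mul _ _).symm
    _ ≤ ∫ τ in (1:ℝ)..t, K * M ^ α * exp (c₀ / 2 * (τ - t)) :=
        intervalIntegral_mono_of_nonneg (by linarith) (fun τ _ ↦ by positivity [hg τ])
          (fun τ hτ ↦ rpow_mul_exp_mul_le hc₀ (by linarith) hK0 hτ.1 hτ.2 (hK τ hτ.1))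
          (Continuous.intervalIntegrable (by fun_prop) _ _)
    _ = K * M ^ α * ∫ τ in (1:ℝ)..t, exp (c₀ / 2 * (τ - t)) :=
        intervalIntegral.integral_const_mul _ _
    _ ≤ K * M ^ α * (c₀ / 2)⁻¹ := by gcongr; exact integral_exp_mul_sub_le (by linarith)
    _ = M ^ α * (c₀ / 2)⁻¹ * K := by ring
end
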